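/- Channel-flush property of Protocol PIF: if a process p starts a PIF-computation (executes the starting action A1) in configuration γ0 and the computation terminates at p (p sets Request_p := Done) in configuration γk, then any message that was in a channel incident to p (a channel from p or to p) in γ0 is no longer in that channel in γk. -/
import Mathlib


/-!
A formal model of Protocol PIF (Algorithm 1) in a fully-connected
message-passing system with unreliable, fair, single-message-capacity
channels.  Processes are `Fin n`; broadcast/feedback data range over `D`.

Every configuration is a possible initial configuration; an execution is an
infinite sequence of atomic steps, each step being an external request
(`env`), an external setting of a feedback message (`setF`), one of the
actions `A1`, `A2`, `A3` of Protocol PIF, or the loss of a message in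
transit.  Fairness of channels and weak fairness of enabled protocol actions
are part of the notion of execution.
-/

set_option autoImplicit false

namespace PIF

inductive Req where
  | Wait | In | Done
deriving DecidableEq

/-- A `⟨PIF, B, F, qState, pState⟩` message: the broadcast data, the feedback
data, the sender's `State[receiver]`, and the sender's `NeigState[receiver]`. -/
structure Msg (D : Type*) where
  b : D
  f : D
  sSt : Fin 5
  sNg : Fin 5

/-- A configuration: the variables of each process together with the contents
of every channel (single-message capacity, hence `Option`).
`chan p q` is the channel from `p` to `q`. -/
structure Cfg (n : ℕ) (D : Type*) where
  req : Fin n → Req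
  bmes : Fin n → D
  fmes : Fin n → Fin n → D
  st : Fin n → Fin n → Fin 5
  ng : Fin n → Fin n → Fin 5
  chan : Fin n → Fin n → Option (Msg D)

inductive Act (n : ℕ) (D : Type*) where
  /-- external request to broadcast `b`: `Request p := Wait`, `B-Mes p := b` -/
  | env (p : Fin n) (b : D)
  /-- the application externally sets the feedback message `F-Mes p [q] := f` -/
  | setF (p q : Fin n) (f : D)
  /-- action `A1` of process `p` (the starting action) -/
  | a1 (p : Fin n)
  /-- action `A2` of process `p` (decision or (re)sending) -/
  | a2 (p : Fin n)
  /-- action `A3`: process `p` receives message `m` from process `q` -/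
  | a3 (p q : Fin n) (m : Msg D)
  /-- the message in transit from `p` to `q` is lost -/
  | lose (p q : Fin n)

variable {n : ℕ} {D : Type*}

def upd2 {β : Type*} (f : Fin n → Fin n → β) (p q : Fin n) (v : β) :
    Fin n → Fin n → β :=
  fun a b => if a = p ∧ b = q then v else f a b

/-- Sending into a single-capacity unreliable channel: if the channel is full
the message is lost; if it is empty, the message is put in the channel or
lost. -/
def send (old : Option (Msg D)) (m : Msg D) (new : Option (Msg D)) : Prop :=
  (old ≠ none ∧ new = old) ∨ (old = none ∧ (new = some m ∨ new = none))

/-- The semantics of one atomic step `γ —A→ γ'`. -/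
def StepAt (γ : Cfg n D) : Act n D → Cfg n D → Prop
  | .env p b, γ' =>
      γ' = { γ with req := Function.update γ.req p .Wait,
                    bmes := Function.update γ.bmes p b }
  | .setF p q f, γ' =>
      γ' = { γ with fmes := upd2 γ.fmes p q f }
  | .a1 p, γ' =>
      γ.req p = .Wait ∧
      γ' = { γ with req := Function.update γ.req p .In,
                    st := Function.update γ.st p (fun _ => 0) }
  | .a2 p, γ' =>
      γ.req p = .In ∧
      (((∀ q, q ≠ p → γ.st p q = 4) ∧
          γ' = { γ with req := Function.update γ.req p .Done }) ∨
       ((¬ ∀ q, q ≠ p → γ.st p q = 4) ∧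
          γ'.req = γ.req ∧ γ'.bmes = γ.bmes ∧ γ'.fmes = γ.fmes ∧
          γ'.st = γ.st ∧ γ'.ng = γ.ng ∧
          (∀ q, q ≠ p → γ.st p q ≠ 4 →
            send (γ.chan p q) ⟨γ.bmes p, γ.fmes p q, γ.st p q, γ.ng p q⟩
              (γ'.chan p q)) ∧
          (∀ a b, ¬ (a = p ∧ b ≠ p ∧ γ.st p b ≠ 4) → γ'.chan a b = γ.chan a b)))
  | .a3 p q m, γ' =>
      q ≠ p ∧ γ.chan q p = some m ∧
      (let st' : Fin 5 :=
        if γ.st p q = m.sNg ∧ (γ.st p q : ℕ) < 4 then γ.st p q + 1 else γ.st p q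
       γ'.req = γ.req ∧ γ'.bmes = γ.bmes ∧ γ'.fmes = γ.fmes ∧
       γ'.st = upd2 γ.st p q st' ∧
       γ'.ng = upd2 γ.ng p q m.sSt ∧
       γ'.chan q p = none ∧
       (((m.sSt : ℕ) < 4 ∧
           send (γ.chan p q) ⟨γ.bmes p, γ.fmes p q, st', m.sSt⟩ (γ'.chan p q)) ∨
        (¬ (m.sSt : ℕ) < 4 ∧ γ'.chan p q = γ.chan p q)) ∧
       (∀ a b, ¬ (a = q ∧ b = p) → ¬ (a = p ∧ b = q) →
          γ'.chan a b = γ.chan a b))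
  | .lose p q, γ' =>
      (∃ m, γ.chan p q = some m) ∧
      γ'.req = γ.req ∧ γ'.bmes = γ.bmes ∧ γ'.fmes = γ.fmes ∧
      γ'.st = γ.st ∧ γ'.ng = γ.ng ∧
      γ'.chan p q = none ∧
      (∀ a b, ¬ (a = p ∧ b = q) → γ'.chan a b = γ.chan a b)

/-- A `receive-brd⟨B⟩ from q` event is generated at `p` in step `γ —A→ ·`. -/
def brdEvent (γ : Cfg n D) (A : Act n D) (p q : Fin n) (B : D) : Prop :=
  ∃ m : Msg D, A = .a3 p q m ∧ m.b = B ∧ γ.ng p q ≠ 3 ∧ m.sSt = 3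

/-- A `receive-fck⟨F⟩ from q` event is generated at `p` in step `γ —A→ ·`
(i.e. `State p [q]` switches from 3 to 4). -/
def fckEvent (γ : Cfg n D) (A : Act n D) (p q : Fin n) (F : D) : Prop :=
  ∃ m : Msg D, A = .a3 p q m ∧ m.f = F ∧ γ.st p q = 3 ∧ m.sNg = 3

def Enabled (γ : Cfg n D) (A : Act n D) : Prop := ∃ γ', StepAt γ A γ'

/-- The actions of the protocol proper (weak fairness applies to these). -/
def ProcAct : Act n D → Prop
  | .a1 _ => True
  | .a2 _ => True
  | .a3 _ _ _ => True
  | _ => False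

/-- Step `i` attempts to send a message from `p` to `q`. -/
def SendAttempt (γ : ℕ → Cfg n D) (act : ℕ → Act n D) (i : ℕ)
    (p q : Fin n) : Prop :=
  (act i = .a2 p ∧ (γ i).req p = .In ∧ q ≠ p ∧ (γ i).st p q ≠ 4 ∧
     ¬ ∀ r, r ≠ p → (γ i).st p r = 4) ∨
  (∃ m : Msg D, act i = .a3 p q m ∧ (m.sSt : ℕ) < 4)

/-- An execution: an infinite sequence of valid atomic steps starting from an
arbitrary configuration, in which (weak fairness) every protocol action that
is continuously enabled is eventually executed, and (channel fairness) if
infinitely many messages are sent from `p` to `q` then `q` receives a message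
from `p` infinitely often. -/
structure Exec (n : ℕ) (D : Type*) where
  γ : ℕ → Cfg n D
  act : ℕ → Act n D
  valid : ∀ i, StepAt (γ i) (act i) (γ (i + 1))
  wf : ∀ A : Act n D, ProcAct A →
        (∃ i, ∀ j, i ≤ j → Enabled (γ j) A) → ∀ i, ∃ j, i ≤ j ∧ act j = A
  chanFair : ∀ p q : Fin n, p ≠ q →
        (∀ i, ∃ j, i ≤ j ∧ SendAttempt γ act j p q) →
        ∀ i, ∃ j, i ≤ j ∧ ∃ m : Msg D, act j = .a3 q p m

/-- Hypothesis 1: while `Request p ≠ Done`, `Request p` is not externally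
set to `Wait`. -/
def Hyp1 (e : Exec n D) : Prop :=
  ∀ i p b, e.act i = .env p b → (e.γ i).req p = .Done

end PIF


namespace PIF

section Aux

variable {n : ℕ} {D : Type*}

/-- Invariant for the channel-flush argument: once fixed `v = NeigState q [p]`,
the counter `State p [q]` never exceeds 2 while the channel `p → q` is never
emptied. -/
def Jinv (γ : Cfg n D) (p q : Fin n) (v : Fin 5) : Prop :=
  ((γ.st p q).val ≤ 2) ∧
  (1 ≤ (γ.st p q).val → ∀ m : Msg D, γ.chan q p = some m → m.sNg = v) ∧
  (2 ≤ (γ.st p q).val → v.val < 2)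

lemma req_step (e : Exec n D) (h1 : Hyp1 e) (i : ℕ) (p : Fin n)
    (hIn : (e.γ i).req p = .In) :
    (e.γ (i+1)).req p = .In ∨ (e.γ (i+1)).req p = .Done := by
  have h := e.valid i
  cases hA : e.act i with
  | env p' b =>
      have hd := h1 i p' b hA
      rw [hA] at h; simp only [StepAt] at h
      by_cases hp : p = p'
      · subst hp; rw [hIn] at hd; simp at hd
      · left; rw [h]; show Function.update (e.γ i).req p' .Wait p = .In
        rw [Function.update_of_ne hp]; exact hIn
  | setF p' q' f =>
      rw [hA] at h; simp only [StepAt] at h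
      left; rw [h]; exact hIn
  | a1 p' =>
      rw [hA] at h; simp only [StepAt] at h
      obtain ⟨hw, hg⟩ := h
      by_cases hp : p = p'
      · subst hp; rw [hIn] at hw; simp at hw
      · left; rw [hg]; show Function.update (e.γ i).req p' .In p = .In
        rw [Function.update_of_ne hp]; exact hIn
  | a2 p' =>
      rw [hA] at h; simp only [StepAt] at h
      rcases h.2 with ⟨hall, hg⟩ | ⟨hne, hreq, _⟩
      · by_cases hp : p = p'
        · subst hp; right; rw [hg]
          show Function.update (e.γ i).req p .Done p = .Done
          rw [Function.update_self]
        · left; rw [hg]; show Function.update (e.γ i).req p' .Done p = .In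
          rw [Function.update_of_ne hp]; exact hIn
      · left; rw [hreq]; exact hIn
  | a3 p' q' m =>
      rw [hA] at h; simp only [StepAt] at h
      obtain ⟨-, -, hreq, -⟩ := h
      left; rw [hreq]; exact hIn
  | lose p' q' =>
      rw [hA] at h; simp only [StepAt] at h
      left; rw [h.2.1]; exact hIn

lemma done_step (e : Exec n D) (i : ℕ) (p : Fin n)
    (hIn : (e.γ i).req p = .In) (hD : (e.γ (i+1)).req p = .Done) :
    ∀ r, r ≠ p → (e.γ i).st p r = 4 := by
  have h := e.valid i
  cases hA : e.act i with
  | env p' b =>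
      rw [hA] at h; simp only [StepAt] at h
      rw [h] at hD
      have hD' : Function.update (e.γ i).req p' Req.Wait p = Req.Done := hD
      by_cases hp : p = p'
      · subst hp; rw [Function.update_self] at hD'; simp at hD'
      · rw [Function.update_of_ne hp, hIn] at hD'; simp at hD'
  | setF p' q' f =>
      rw [hA] at h; simp only [StepAt] at h
      rw [h] at hD
      have hD' : (e.γ i).req p = Req.Done := hD
      rw [hIn] at hD'; simp at hD'
  | a1 p' =>
      rw [hA] at h; simp only [StepAt] at h
      obtain ⟨hw, hg⟩ := h
      rw [hg] at hD
      have hD' : Function.update (e.γ i).req p' Req.In p = Req.Done := hD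
      by_cases hp : p = p'
      · subst hp; rw [Function.update_self] at hD'; simp at hD'
      · rw [Function.update_of_ne hp, hIn] at hD'; simp at hD'
  | a2 p' =>
      rw [hA] at h; simp only [StepAt] at h
      rcases h.2 with ⟨hall, hg⟩ | ⟨hne, hreq, _⟩
      · by_cases hp : p = p'
        · subst hp; exact hall
        · rw [hg] at hD
          have hD' : Function.update (e.γ i).req p' Req.Done p = Req.Done := hD
          rw [Function.update_of_ne hp, hIn] at hD'; simp at hD'
      · rw [hreq, hIn] at hD; simp at hD
  | a3 p' q' m =>
      rw [hA] at h; simp only [StepAt] at h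
      obtain ⟨-, -, hreq, -⟩ := h
      rw [hreq, hIn] at hD; simp at hD
  | lose p' q' =>
      rw [hA] at h; simp only [StepAt] at h
      rw [h.2.1, hIn] at hD; simp at hD

lemma st_step (e : Exec n D) (i : ℕ) (p q : Fin n)
    (hIn : (e.γ i).req p = .In)
    (hno : ∀ m : Msg D, e.act i ≠ .a3 p q m) :
    (e.γ (i+1)).st p q = (e.γ i).st p q := by
  have h := e.valid i
  cases hA : e.act i with
  | env p' b => rw [hA] at h; simp only [StepAt] at h; rw [h]
  | setF p' q' f => rw [hA] at h; simp only [StepAt] at h; rw [h]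
  | a1 p' =>
      rw [hA] at h; simp only [StepAt] at h
      obtain ⟨hw, hg⟩ := h
      have hp : p ≠ p' := by rintro rfl; rw [hIn] at hw; simp at hw
      rw [hg]
      show Function.update (e.γ i).st p' (fun _ => 0) p q = (e.γ i).st p q
      rw [Function.update_of_ne hp]
  | a2 p' =>
      rw [hA] at h; simp only [StepAt] at h
      rcases h.2 with ⟨hall, hg⟩ | ⟨hne, hreq, hbm, hfm, hstq, _⟩
      · rw [hg]
      · rw [hstq]
  | a3 p' q' m =>
      rw [hA] at h; simp only [StepAt] at h
      obtain ⟨-, -, -, -, -, hstq, -⟩ := h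
      rw [hstq]
      have : ¬ (p = p' ∧ q = q') := by
        rintro ⟨rfl, rfl⟩; exact hno m hA
      simp [upd2, this]
  | lose p' q' =>
      rw [hA] at h; simp only [StepAt] at h
      rw [h.2.2.2.2.1]

lemma ng_step (e : Exec n D) (i : ℕ) (q p : Fin n)
    (hno : ∀ m : Msg D, e.act i ≠ .a3 q p m) :
    (e.γ (i+1)).ng q p = (e.γ i).ng q p := by
  have h := e.valid i
  cases hA : e.act i with
  | env p' b => rw [hA] at h; simp only [StepAt] at h; rw [h]
  | setF p' q' f => rw [hA] at h; simp only [StepAt] at h; rw [h]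
  | a1 p' =>
      rw [hA] at h; simp only [StepAt] at h
      rw [h.2]
  | a2 p' =>
      rw [hA] at h; simp only [StepAt] at h
      rcases h.2 with ⟨hall, hg⟩ | ⟨hne, hreq, hbm, hfm, hstq, hngq, _⟩
      · rw [hg]
      · rw [hngq]
  | a3 p' q' m =>
      rw [hA] at h; simp only [StepAt] at h
      obtain ⟨-, -, -, -, -, -, hngq, -⟩ := h
      rw [hngq]
      have : ¬ (q = p' ∧ p = q') := by
        rintro ⟨rfl, rfl⟩; exact hno m hA
      simp [upd2, this]
  | lose p' q' =>
      rw [hA] at h; simp only [StepAt] at h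
      rw [h.2.2.2.2.2.1]

lemma a3_empties (e : Exec n D) (i : ℕ) (a b : Fin n) (m : Msg D)
    (hA : e.act i = .a3 a b m) : (e.γ (i+1)).chan b a = none := by
  have h := e.valid i
  rw [hA] at h; simp only [StepAt] at h
  obtain ⟨-, -, -, -, -, -, -, hempty, -⟩ := h
  exact hempty

lemma lose_empties (e : Exec n D) (i : ℕ) (a b : Fin n)
    (hA : e.act i = .lose a b) : (e.γ (i+1)).chan a b = none := by
  have h := e.valid i
  rw [hA] at h; simp only [StepAt] at h
  exact h.2.2.2.2.2.2.1

lemma fin_val_add_one (x : Fin 5) (hx : x.val < 4) : (x + 1).val = x.val + 1 := by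
  have h1 : ((1 : Fin 5)).val = 1 := rfl
  rw [Fin.add_def]
  simp only [h1]
  omega

lemma Jinv_step (e : Exec n D) (i : ℕ) (p q : Fin n) (hq : q ≠ p) (v : Fin 5)
    (hIn : (e.γ i).req p = .In)
    (hng : (e.γ i).ng q p = v)
    (hno3 : ∀ m : Msg D, e.act i ≠ .a3 q p m)
    (hJ : Jinv (e.γ i) p q v) :
    Jinv (e.γ (i+1)) p q v := by
  obtain ⟨hk2, honly, hv2⟩ := hJ
  have h := e.valid i
  cases hA : e.act i with
  | env p' b =>
      rw [hA] at h; simp only [StepAt] at h; rw [h]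
      exact ⟨hk2, honly, hv2⟩
  | setF p' q' f =>
      rw [hA] at h; simp only [StepAt] at h; rw [h]
      exact ⟨hk2, honly, hv2⟩
  | a1 p' =>
      rw [hA] at h; simp only [StepAt] at h
      obtain ⟨hw, hg⟩ := h
      have hp : p ≠ p' := by rintro rfl; rw [hIn] at hw; simp at hw
      have hst' : (e.γ (i+1)).st p q = (e.γ i).st p q := by
        rw [hg]
        show Function.update (e.γ i).st p' (fun _ => 0) p q = (e.γ i).st p q
        rw [Function.update_of_ne hp]
      have hch : (e.γ (i+1)).chan q p = (e.γ i).chan q p := by rw [hg]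
      exact ⟨by rw [hst']; exact hk2,
        by rw [hst', hch]; exact honly,
        by rw [hst']; exact hv2⟩
  | a2 p' =>
      rw [hA] at h; simp only [StepAt] at h
      rcases h.2 with ⟨hall, hg⟩ | ⟨hne, hreq, hbm, hfm, hstq, hngq, hsend, hframe⟩
      · rw [hg]; exact ⟨hk2, honly, hv2⟩
      · have hst' : (e.γ (i+1)).st p q = (e.γ i).st p q := by rw [hstq]
        by_cases hpq : p' = q
        · subst hpq
          by_cases h4 : (e.γ i).st p' p = 4
          · have hch : (e.γ (i+1)).chan p' p = (e.γ i).chan p' p := by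
              apply hframe
              rintro ⟨-, -, hc⟩; exact hc h4
            exact ⟨by rw [hst']; exact hk2,
              by rw [hst', hch]; exact honly,
              by rw [hst']; exact hv2⟩
          · have hs := hsend p (Ne.symm hq) h4
            rcases hs with ⟨hnn, heq⟩ | ⟨hnone, hsome | hnone'⟩
            · exact ⟨by rw [hst']; exact hk2,
                by rw [hst', heq]; exact honly,
                by rw [hst']; exact hv2⟩
            · refine ⟨by rw [hst']; exact hk2, ?_, by rw [hst']; exact hv2⟩
              intro _ m' hm'
              rw [hsome] at hm'
              have : m' = ⟨(e.γ i).bmes p', (e.γ i).fmes p' p, (e.γ i).st p' p,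
                  (e.γ i).ng p' p⟩ := by
                injection hm' with h'; exact h'.symm
              rw [this]
              exact hng
            · refine ⟨by rw [hst']; exact hk2, ?_, by rw [hst']; exact hv2⟩
              intro _ m' hm'
              rw [hnone'] at hm'; cases hm'
        · have hch : (e.γ (i+1)).chan q p = (e.γ i).chan q p := by
            apply hframe
            rintro ⟨hc, -⟩; exact hpq hc.symm
          exact ⟨by rw [hst']; exact hk2,
            by rw [hst', hch]; exact honly,
            by rw [hst']; exact hv2⟩
  | a3 a b m =>
      rw [hA] at h; simp only [StepAt] at h
      obtain ⟨hba, hchsome, hreq, hbm, hfm, hstq, hngq, hempty, hsnd, hframe⟩ := h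
      by_cases hab : a = p ∧ b = q
      · obtain ⟨rfl, rfl⟩ := hab
        have hstv : (e.γ (i+1)).st a b =
            (if (e.γ i).st a b = m.sNg ∧ ((e.γ i).st a b).val < 4
              then (e.γ i).st a b + 1 else (e.γ i).st a b) := by
          rw [hstq]; simp [upd2]
        by_cases hc : (e.γ i).st a b = m.sNg ∧ ((e.γ i).st a b).val < 4
        · rw [if_pos hc] at hstv
          have hval : ((e.γ i).st a b + 1).val = ((e.γ i).st a b).val + 1 :=
            fin_val_add_one _ hc.2
          have hkcases : ((e.γ i).st a b).val = 0 ∨ ((e.γ i).st a b).val = 1 ∨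
              ((e.γ i).st a b).val = 2 := by omega
          have hsngval : m.sNg.val = ((e.γ i).st a b).val := by rw [hc.1]
          rcases hkcases with hk | hk | hk
          · refine ⟨by rw [hstv]; omega, ?_, by rw [hstv]; omega⟩
            intro _ m' hm'
            rw [hempty] at hm'; cases hm'
          · have hvv : m.sNg = v := honly (by omega) m hchsome
            have hv1 : v.val = 1 := by rw [← hvv]; omega
            refine ⟨by rw [hstv]; omega, ?_, by intro _; omega⟩
            intro _ m' hm'
            rw [hempty] at hm'; cases hm'
          · have hvv : m.sNg = v := honly (by omega) m hchsome
            have : v.val < 2 := hv2 (by omega)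
            rw [← hvv] at this
            omega
        · rw [if_neg hc] at hstv
          refine ⟨by rw [hstv]; exact hk2, ?_, by rw [hstv]; exact hv2⟩
          intro _ m' hm'
          rw [hempty] at hm'; cases hm'
      · have hab2 : ¬ (a = q ∧ b = p) := by
          rintro ⟨rfl, rfl⟩; exact hno3 m hA
        have hst' : (e.γ (i+1)).st p q = (e.γ i).st p q := by
          rw [hstq]
          have : ¬ (p = a ∧ q = b) := by rintro ⟨rfl, rfl⟩; exact hab ⟨rfl, rfl⟩
          simp [upd2, this]
        have hch : (e.γ (i+1)).chan q p = (e.γ i).chan q p := by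
          apply hframe
          · rintro ⟨rfl, rfl⟩; exact hab ⟨rfl, rfl⟩
          · rintro ⟨rfl, rfl⟩; exact hab2 ⟨rfl, rfl⟩
        exact ⟨by rw [hst']; exact hk2,
          by rw [hst', hch]; exact honly,
          by rw [hst']; exact hv2⟩
  | lose a b =>
      rw [hA] at h; simp only [StepAt] at h
      obtain ⟨-, hreq, hbm, hfm, hstq, hngq, hnone, hframe⟩ := h
      have hst' : (e.γ (i+1)).st p q = (e.γ i).st p q := by rw [hstq]
      by_cases hab : a = q ∧ b = p
      · obtain ⟨rfl, rfl⟩ := hab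
        refine ⟨by rw [hst']; exact hk2, ?_, by rw [hst']; exact hv2⟩
        intro _ m' hm'
        rw [hnone] at hm'; cases hm'
      · have hch : (e.γ (i+1)).chan q p = (e.γ i).chan q p := hframe q p (by
          rintro ⟨rfl, rfl⟩; exact hab ⟨rfl, rfl⟩)
        exact ⟨by rw [hst']; exact hk2,
          by rw [hst', hch]; exact honly,
          by rw [hst']; exact hv2⟩

end Aux

end PIF


namespace PIF

/-- **Channel-flush property of Protocol PIF, Property 1.**
If a process `p` starts a PIF-computation (executes the starting action `A1`)
in configuration `γ s` and the computation terminates at `p`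
(`t` is the first subsequent instant with `Request p = Done`), then any
message that was in a channel incident to `p` (from `p` or to `p`) in the
starting configuration is no longer in that channel at termination: each such
channel is emptied at some point in between, so its initial content has been
received or lost. -/
theorem pif_flush {n : ℕ} {D : Type*}
    (e : Exec n D) (h1 : Hyp1 e) (p : Fin n) (s t : ℕ)
    (hstart : e.act s = .a1 p) (hst : s < t)
    (hdone : (e.γ t).req p = .Done)
    (hfirst : ∀ u, s < u → u < t → (e.γ u).req p ≠ .Done) :
    ∀ q, q ≠ p →
      (∃ u, s < u ∧ u ≤ t ∧ (e.γ u).chan p q = none) ∧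
      (∃ u, s < u ∧ u ≤ t ∧ (e.γ u).chan q p = none) := by
  -- the configuration right after the starting action A1
  have hs1 : e.γ (s+1) = { e.γ s with
      req := Function.update (e.γ s).req p .In,
      st := Function.update (e.γ s).st p (fun _ => 0) } := by
    have h := e.valid s
    rw [hstart] at h
    exact h.2
  have hreq1 : (e.γ (s+1)).req p = .In := by
    rw [hs1]
    show Function.update (e.γ s).req p .In p = .In
    rw [Function.update_self]
  have hst1 : ∀ r, (e.γ (s+1)).st p r = 0 := by
    intro r
    rw [hs1]
    show Function.update (e.γ s).st p (fun _ => 0) p r = 0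
    rw [Function.update_self]
  have ht2 : s + 1 < t := by
    rcases Nat.lt_or_ge (s+1) t with h | h
    · exact h
    · have : t = s + 1 := by omega
      rw [this, hreq1] at hdone
      simp at hdone
  -- Request p stays In strictly between s and t
  have hreqIn : ∀ u, s < u → u < t → (e.γ u).req p = .In := by
    intro u
    induction u with
    | zero => omega
    | succ u ih =>
        intro hl hr
        rcases Nat.lt_or_ge s u with hsu | hsu
        · have hu := ih hsu (by omega)
          rcases req_step e h1 u p hu with h | h
          · exact h
          · exact absurd h (hfirst (u+1) (by omega) hr)
        · have : u = s := by omega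
          subst this
          exact hreq1
  -- at termination, all State p [r] = 4
  have hSt4 : ∀ r, r ≠ p → (e.γ (t-1)).st p r = 4 := by
    have hIn := hreqIn (t-1) (by omega) (by omega)
    have hD : (e.γ (t-1+1)).req p = .Done := by
      rw [show t - 1 + 1 = t by omega]; exact hdone
    exact done_step e (t-1) p hIn hD
  intro q hq
  constructor
  · -- the channel p → q is emptied
    by_contra hcon
    push_neg at hcon
    have hfull : ∀ u, s < u → u ≤ t → (e.γ u).chan p q ≠ none := by
      intro u h1' h2' hn
      exact (hcon u h1' h2' hn).elim
    have hno3 : ∀ i, s ≤ i → i < t → ∀ m : Msg D, e.act i ≠ .a3 q p m := by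
      intro i hl hr m hA
      exact hfull (i+1) (by omega) (by omega) (a3_empties e i q p m hA)
    set v : Fin 5 := (e.γ (s+1)).ng q p with hv
    have hng : ∀ u, s + 1 ≤ u → u ≤ t → (e.γ u).ng q p = v := by
      intro u
      induction u with
      | zero => omega
      | succ u ih =>
          intro hl hr
          rcases Nat.lt_or_ge (s+1) (u+1) with hsu | hsu
          · have hu := ih (by omega) (by omega)
            rw [ng_step e u q p (hno3 u (by omega) (by omega))]
            exact hu
          · have : u + 1 = s + 1 := by omega
            rw [this]
    have hJ : ∀ u, s + 1 ≤ u → u ≤ t → Jinv (e.γ u) p q v := by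
      intro u
      induction u with
      | zero => omega
      | succ u ih =>
          intro hl hr
          rcases Nat.lt_or_ge (s+1) (u+1) with hsu | hsu
          · exact Jinv_step e u p q hq v (hreqIn u (by omega) (by omega))
              (hng u (by omega) (by omega)) (hno3 u (by omega) (by omega))
              (ih (by omega) (by omega))
          · have : u + 1 = s + 1 := by omega
            rw [this]
            refine ⟨?_, ?_, ?_⟩ <;> rw [hst1 q] <;> intros <;> omega
    have hJt := hJ (t-1) (by omega) (by omega)
    have h4 := hSt4 q hq
    have := hJt.1
    rw [h4] at this
    exact absurd this (by decide)
  · -- the channel q → p is emptied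
    have hex : ∃ i, s + 1 ≤ i ∧ i < t - 1 ∧ ∃ m : Msg D, e.act i = .a3 p q m := by
      by_contra hcon
      push_neg at hcon
      have hconst : ∀ u, s + 1 ≤ u → u ≤ t - 1 → (e.γ u).st p q = 0 := by
        intro u
        induction u with
        | zero => omega
        | succ u ih =>
            intro hl hr
            rcases Nat.lt_or_ge (s+1) (u+1) with hsu | hsu
            · have hu := ih (by omega) (by omega)
              rw [st_step e u p q (hreqIn u (by omega) (by omega)) ?_]
              · exact hu
              · intro m hA
                exact (hcon u (by omega) (by omega) m hA).elim
            · have : u + 1 = s + 1 := by omega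
              rw [this]
              exact hst1 q
      have h0 := hconst (t-1) (by omega) le_rfl
      have h4 := hSt4 q hq
      rw [h0] at h4
      exact absurd h4 (by decide)
    obtain ⟨i, hl, hr, m, hA⟩ := hex
    exact ⟨i+1, by omega, by omega, a3_empties e i p q m hA⟩

end PIF
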